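/- For any n ≥ 1, any X₁,...,X_n ∈ ℂ, and any choice ε₁,...,ε_n ∈ {0,1}: Tr(∏_{j=1}^{n} A_{X_j}·Ω_{ε_j}) = ±(∏_{j=1}^{n} X_j*) + R, where X_j* = X_j + h(ε_j) + k(ε_{j-1}) (indices mod n) with h(0)=1, h(1)=0, k(0)=0, k(1)=1, and R is a polynomial in X₁,...,X_n of total degree at most n-2 and of degree at most 1 in each X_j. -/

import Mathlib

/-!
Each factor is affine in its variable: `A_X Ω_e = X • E₁₂Ω_e + DΩ_e` with `D = diag(1, -1)`.
Expanding the product writes the trace as `∑_S (∏_{j ∈ S} X_j) tr M_S`, where `M_S` is the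
ordered product with `E₁₂Ω` at the positions in `S` and `DΩ` elsewhere. Since `Ω_e` has
`(2,1)`-entry `1`, the rank-one matrices `E₁₂Ω_e` satisfy `(E₁₂Ω_a)(E₁₂Ω_b) = E₁₂Ω_b`. Hence the
coefficient of `X₁⋯Xₙ` is `1`, and, after rotating the product cyclically, the coefficient of
`∏_{j ≠ i} X_j` is `tr(E₁₂Ω_{ε_{i-1}} DΩ_{ε_i}) = h(ε_i) + k(ε_{i-1})`. These are the two top
coefficients of `∏ X_j*`, so the difference only involves monomials with `|S| ≤ n - 2`.
-/

open Matrix MvPolynomial Finset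

theorem List.prod_map_smul_add {ι R A : Type*} [CommSemiring R] [Semiring A] [Algebra R A]
    [DecidableEq ι] (x : ι → R) (C B : ι → A) {l : List ι} (hl : l.Nodup) :
    (l.map fun j => x j • C j + B j).prod =
      ∑ s ∈ l.toFinset.powerset,
        (∏ j ∈ s, x j) • (l.map fun j => if j ∈ s then C j else B j).prod := by
  induction l with
  | nil => simp
  | cons e l ih =>
    obtain ⟨he, hl⟩ := List.nodup_cons.1 hl
    have he' : e ∉ l.toFinset := by simpa using he
    have hP (s : Finset ι) : (l.map fun j => if j ∈ insert e s then C j else B j) =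
        l.map fun j => if j ∈ s then C j else B j :=
      List.map_congr_left fun j hj => by
        simp only [Finset.mem_insert, ne_of_mem_of_not_mem hj he, false_or]
    rw [List.toFinset_cons, Finset.sum_powerset_insert he', List.map_cons, List.prod_cons,
      ih hl, add_mul, Finset.mul_sum, Finset.mul_sum, add_comm]
    congr 1 <;> refine Finset.sum_congr rfl fun s hs => ?_ <;>
      have hes : e ∉ s := fun h => he' (Finset.mem_powerset.1 hs h)
    · rw [List.map_cons, List.prod_cons, if_neg hes, mul_smul_comm]
    · rw [Finset.prod_insert hes, List.map_cons, List.prod_cons,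
        if_pos (Finset.mem_insert_self _ _), hP, mul_smul, smul_mul_assoc, mul_smul_comm]

theorem Matrix.trace_prod_ofFn_add {m : ℕ} {n R : Type*} [Fintype n] [DecidableEq n]
    [CommSemiring R] (F : Fin (m + 1) → Matrix n n R) (a : Fin (m + 1)) :
    trace (List.ofFn fun j => F (j + a)).prod = trace (List.ofFn F).prod := by
  have shift_one (G : Fin (m + 1) → Matrix n n R) :
      trace (List.ofFn fun j => G (j + 1)).prod = trace (List.ofFn G).prod := by
    rw [List.ofFn_succ' (fun j => G (j + 1)), List.ofFn_succ, List.prod_concat, List.prod_cons,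
      trace_mul_comm]
    simp only [Fin.coeSucc_eq_succ, Fin.last_add_one]
  induction a using Fin.induction with
  | zero => simp
  | succ a ih =>
    rw [← Fin.coeSucc_eq_succ]
    simpa only [add_assoc, add_comm (1 : Fin (m + 1))] using
      (shift_one fun j => F (j + a.castSucc)).trans ih

namespace MvPolynomial

variable {σ R : Type*} [CommSemiring R]

theorem totalDegree_sum_C_mul_prod_X_le (S : Finset (Finset σ)) (a : Finset σ → R) {d : ℕ}
    (hS : ∀ s ∈ S, s.card ≤ d) :
    (∑ s ∈ S, C (a s) * ∏ j ∈ s, X j).totalDegree ≤ d := by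
  rcases subsingleton_or_nontrivial R with hR | hR
  · simp [Subsingleton.elim (∑ s ∈ S, C (a s) * ∏ j ∈ s, X j : MvPolynomial σ R) 0]
  refine (totalDegree_finsetSum _ _).trans (Finset.sup_le fun s hs => ?_)
  have hX : (∏ j ∈ s, (X j : MvPolynomial σ R)).totalDegree ≤ s.card :=
    (totalDegree_finsetProd _ _).trans (by simp)
  exact (totalDegree_mul _ _).trans (by rw [totalDegree_C, zero_add]; exact hX.trans (hS s hs))

theorem degreeOf_sum_C_mul_prod_X_le_one (S : Finset (Finset σ)) (a : Finset σ → R) (i : σ) :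
    (∑ s ∈ S, C (a s) * ∏ j ∈ s, X j).degreeOf i ≤ 1 := by
  classical
  rcases subsingleton_or_nontrivial R with hR | hR
  · simp [Subsingleton.elim (∑ s ∈ S, C (a s) * ∏ j ∈ s, X j : MvPolynomial σ R) 0]
  refine (degreeOf_sum_le _ _ _).trans (Finset.sup_le fun s _ => ?_)
  calc (C (a s) * ∏ j ∈ s, (X j : MvPolynomial σ R)).degreeOf i
      ≤ ∑ j ∈ s, (X j : MvPolynomial σ R).degreeOf i :=
        (degreeOf_C_mul_le _ _ _).trans (degreeOf_prod_le _ _ _)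
    _ = ∑ j ∈ s, if i = j then 1 else 0 := by simp only [degreeOf_X]
    _ ≤ 1 := by rw [Finset.sum_ite_eq]; split <;> simp

end MvPolynomial

namespace HolonomyTrace

variable {R : Type*} [CommRing R]

def omega (e : Fin 2) : Matrix (Fin 2) (Fin 2) R :=
  if e = 0 then !![1, -1; 1, 0] else !![0, -1; 1, -1]

def linPart (e : Fin 2) : Matrix (Fin 2) (Fin 2) R := !![0, 1; 0, 0] * omega e

def constPart (e : Fin 2) : Matrix (Fin 2) (Fin 2) R := !![1, 0; 0, -1] * omega e

theorem holonomy_mul_omega (x : R) (e : Fin 2) :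
    !![1, x; 0, -1] * omega e = x • linPart e + constPart e := by
  have : (!![1, x; 0, -1] : Matrix (Fin 2) (Fin 2) R) = x • !![0, 1; 0, 0] + !![1, 0; 0, -1] := by
    ext i j; fin_cases i <;> fin_cases j <;> simp
  rw [this, add_mul, smul_mul_assoc, linPart, constPart]

theorem linPart_mul_linPart (a b : Fin 2) :
    (linPart a * linPart b : Matrix (Fin 2) (Fin 2) R) = linPart b := by
  fin_cases a <;> fin_cases b <;> simp [linPart, omega]

theorem trace_linPart (e : Fin 2) : trace (linPart e : Matrix (Fin 2) (Fin 2) R) = 1 := by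
  fin_cases e <;> simp [linPart, omega, trace_fin_two]

theorem trace_linPart_mul_constPart (a b : Fin 2) :
    trace (linPart a * constPart b : Matrix (Fin 2) (Fin 2) R) =
      (if b = 0 then 1 else 0) + (if a = 0 then 0 else 1) := by
  fin_cases a <;> fin_cases b <;> simp [linPart, constPart, omega, trace_fin_two]

-- The case `n = 1`: there `ε (i - 1) = ε i`, but no `linPart` factor precedes `constPart`.
theorem trace_constPart (e : Fin 2) :
    trace (constPart e : Matrix (Fin 2) (Fin 2) R) = trace (linPart e * constPart e) := by
  fin_cases e <;> simp [linPart, constPart, omega, trace_fin_two]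

theorem prod_ofFn_linPart_mul_linPart {k : ℕ} (f : Fin k → Fin 2) (b : Fin 2) :
    (List.ofFn fun j => (linPart (f j) : Matrix (Fin 2) (Fin 2) R)).prod * linPart b =
      linPart b := by
  induction k with
  | zero => simp
  | succ k ih => rw [List.ofFn_succ, List.prod_cons, mul_assoc, ih, linPart_mul_linPart]

theorem prod_ofFn_linPart {m : ℕ} (f : Fin (m + 1) → Fin 2) :
    (List.ofFn fun j => (linPart (f j) : Matrix (Fin 2) (Fin 2) R)).prod =
      linPart (f (Fin.last m)) := by
  rw [List.ofFn_succ', List.prod_concat, prod_ofFn_linPart_mul_linPart]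

theorem trace_prod_ofFn_linPart_except {m : ℕ} (ε : Fin (m + 1) → Fin 2) (i : Fin (m + 1)) :
    trace (List.ofFn fun j =>
        if j = i then constPart (ε j) else (linPart (ε j) : Matrix (Fin 2) (Fin 2) R)).prod =
      (if ε i = 0 then 1 else 0) + (if ε (i - 1) = 0 then 0 else 1) := by
  have hne (j : Fin m) : j.succ + i ≠ i := fun h => Fin.succ_ne_zero j (add_eq_right.1 h)
  rw [← trace_prod_ofFn_add _ i, List.ofFn_succ, List.prod_cons, trace_mul_comm]
  simp only [zero_add, if_pos, hne, if_false, ← trace_linPart_mul_constPart]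
  cases m with
  | zero => simp [trace_constPart]
  | succ p =>
    rw [prod_ofFn_linPart, Fin.succ_last, sub_eq_neg_add,
      ← eq_neg_of_add_eq_zero_left (Fin.last_add_one _)]

variable {n : ℕ}

def coeffMat (ε : Fin n → Fin 2) (s : Finset (Fin n)) : Matrix (Fin 2) (Fin 2) R :=
  ((List.finRange n).map fun j => if j ∈ s then linPart (ε j) else constPart (ε j)).prod

def starOffset [NeZero n] (ε : Fin n → Fin 2) (j : Fin n) : R :=
  (if ε j = 0 then 1 else 0) + (if ε (j - 1) = 0 then 0 else 1)

theorem trace_coeffMat_of_card_compl_le_one [NeZero n] (ε : Fin n → Fin 2)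
    {s : Finset (Fin n)} (hs : sᶜ.card ≤ 1) :
    trace (coeffMat ε s : Matrix (Fin 2) (Fin 2) R) = ∏ j ∈ sᶜ, starOffset ε j := by
  obtain ⟨m, rfl⟩ := Nat.exists_eq_succ_of_ne_zero (NeZero.ne n)
  obtain ⟨i, hi⟩ := Finset.card_le_one_iff_subset_singleton.1 hs
  rcases Finset.subset_singleton_iff.1 hi with h | h
  · obtain rfl : s = univ := by simpa using h
    simp only [coeffMat, mem_univ, if_true, ← List.ofFn_eq_map, prod_ofFn_linPart,
      trace_linPart, compl_univ, prod_empty]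
  · obtain rfl : s = {i}ᶜ := by rw [← h, compl_compl]
    simp only [coeffMat, compl_compl, prod_singleton, mem_compl, mem_singleton, ite_not,
      ← List.ofFn_eq_map]
    exact trace_prod_ofFn_linPart_except ε i

noncomputable def remainder [NeZero n] (ε : Fin n → Fin 2) : MvPolynomial (Fin n) R :=
  ∑ s with 2 ≤ sᶜ.card, C (trace (coeffMat ε s) - ∏ j ∈ sᶜ, starOffset ε j) * ∏ j ∈ s, X j

theorem trace_holonomy_prod [NeZero n] (ε : Fin n → Fin 2) (x : Fin n → R) :
    trace ((List.finRange n).map fun j => !![1, x j; 0, -1] * omega (ε j)).prod =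
      ∏ j, (x j + starOffset ε j) + eval x (remainder ε) := by
  have hvanish : ∀ s ∈ (univ : Finset (Finset (Fin n))),
      (∏ j ∈ s, x j) * trace (coeffMat ε s) - (∏ j ∈ s, x j) * ∏ j ∈ sᶜ, starOffset ε j ≠ 0 →
        2 ≤ sᶜ.card := by
    intro s _ h
    by_contra hlt
    rw [trace_coeffMat_of_card_compl_le_one ε (by omega), sub_self] at h
    exact h rfl
  simp only [holonomy_mul_omega]
  rw [List.prod_map_smul_add _ _ _ (List.nodup_finRange n), List.toFinset_finRange,
    powerset_univ, trace_sum]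
  simp only [trace_smul, smul_eq_mul]
  change ∑ s, (∏ j ∈ s, x j) * trace (coeffMat ε s) = _
  rw [← sub_eq_iff_eq_add', Finset.prod_add, powerset_univ]
  simp only [← compl_eq_univ_sdiff]
  rw [← Finset.sum_sub_distrib, ← Finset.sum_filter_of_ne hvanish, remainder, map_sum]
  refine Finset.sum_congr rfl fun s _ => ?_
  simp only [eval_mul, eval_C, eval_prod, eval_X]
  ring

theorem totalDegree_remainder_le [NeZero n] (ε : Fin n → Fin 2) :
    (remainder ε : MvPolynomial (Fin n) R).totalDegree ≤ n - 2 := by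
  refine totalDegree_sum_C_mul_prod_X_le _ _ fun s hs => ?_
  have := s.card_le_univ
  simp only [Finset.mem_filter, Finset.card_compl, Fintype.card_fin] at hs this
  omega

theorem degreeOf_remainder_le [NeZero n] (ε : Fin n → Fin 2) (j : Fin n) :
    (remainder ε : MvPolynomial (Fin n) R).degreeOf j ≤ 1 :=
  degreeOf_sum_C_mul_prod_X_le_one _ _ j

end HolonomyTrace

/-- Trace of holonomy products (no scc-arcs case).  With
`A_X = [[1,X],[0,-1]]`, `Ω₀ = [[1,-1],[1,0]]`, `Ω₁ = [[0,-1],[1,-1]]`: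
for any `n ≥ 1` and any `ε : Fin n → Fin 2`, there is a sign `±1` and a
polynomial `R` in `X₁,…,Xₙ` of total degree at most `n-2` and degree at most
`1` in each variable, such that for all `X₁,…,Xₙ ∈ ℂ`,
`Tr(∏ⱼ A_{Xⱼ}·Ω_{εⱼ}) = ±(∏ⱼ Xⱼ*) + R(X)`, where
`Xⱼ* = Xⱼ + h(εⱼ) + k(ε_{j-1})` (indices cyclic), `h(0)=1, h(1)=0`,
`k(0)=0, k(1)=1`. -/
theorem trace_top_term_no_scc (n : ℕ) (hn : 1 ≤ n) (ε : Fin n → Fin 2) :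
    let Aa : ℂ → Matrix (Fin 2) (Fin 2) ℂ := fun X => !![1, X; 0, -1]
    let Om : Fin 2 → Matrix (Fin 2) (Fin 2) ℂ :=
      fun e => if e = 0 then !![1, -1; 1, 0] else !![0, -1; 1, -1]
    let h : Fin 2 → ℂ := fun e => if e = 0 then 1 else 0
    let k : Fin 2 → ℂ := fun e => if e = 0 then 0 else 1
    haveI : NeZero n := ⟨Nat.one_le_iff_ne_zero.mp hn⟩
    ∃ (s : ℂ) (R : MvPolynomial (Fin n) ℂ),
      (s = 1 ∨ s = -1) ∧
      R.totalDegree ≤ n - 2 ∧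
      (∀ j : Fin n, R.degreeOf j ≤ 1) ∧
      ∀ X : Fin n → ℂ,
        (((List.finRange n).map (fun j => Aa (X j) * Om (ε j))).prod).trace
          = s * (∏ j : Fin n, (X j + h (ε j) + k (ε (j - 1))))
            + MvPolynomial.eval X R := by
  intro Aa Om h k
  have : NeZero n := ⟨Nat.one_le_iff_ne_zero.mp hn⟩
  refine ⟨1, HolonomyTrace.remainder ε, Or.inl rfl, HolonomyTrace.totalDegree_remainder_le ε,
    HolonomyTrace.degreeOf_remainder_le ε, fun X => ?_⟩
  rw [one_mul]
  simp only [add_assoc]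
  exact HolonomyTrace.trace_holonomy_prod ε X
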